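/- Let H be a separable complex Hilbert space, let n ∈ ℕ, and let p : [0,1] → B(H) be strongly continuous with each p(t) a projection such that dim(range p(t)) ≥ n for every t ∈ [0,1]. Then there exists a map q : [0,1] → B(H), continuous in operator norm, such that each q(t) is a projection, q(t) ≤ p(t) (i.e., p(t) q(t) = q(t) = q(t) p(t)) and dim(range q(t)) = n for every t ∈ [0,1]. (The continuous field of Hilbert spaces determined by p has a trivial subfield of rank n.) -/

import Mathlib

open ContinuousLinearMap Module

/-- A projection on a Hilbert space: a self-adjoint idempotent bounded operator. -/
def IsProjection {H : Type*} [NormedAddCommGroup H] [InnerProductSpace ℂ H]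
    [CompleteSpace H] (p : H →L[ℂ] H) : Prop :=
  IsSelfAdjoint p ∧ p * p = p

/-!
By induction on `n`, it suffices to find a norm-continuous rank-one projection `r ≤ p`: the
induction hypothesis applied to the strongly continuous projection `p - r` then gives `q'`, and
`q' + r` works. Such an `r` is `t ↦ ⟪v t, ·⟫ • v t` for a continuous unit vector field `v` with
`v t ∈ range p(t)`, which is built by continuous induction along the parameter. Near any `s`, a
unit vector `u ∈ range p(s)` satisfies `‖p(t) u - u‖ < 1/2`. A field defined up to `b`, with
value `x` of norm one at `b`, is continued by `t ↦ p(t)((1 - σ) x + σ u)`, where `u` is replaced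
by `-u` if necessary so that `re ⟪x, u⟫ ≥ 0` (then the segment stays at norm `≥ 1/2`), and `σ`
climbs from `0` to `1` so fast that `p(t) x` is still close to `x` meanwhile. Continuity of
`t ↦ p(t)(w t)` for continuous `w` comes from strong continuity and `‖p(t)‖ ≤ 1`.
-/

open Filter Topology InnerProductSpace RCLike

lemma IsSelfAdjoint.mul_eq_right_iff_mul_eq_left {R : Type*} [Mul R] [StarMul R] {p q : R}
    (hp : IsSelfAdjoint p) (hq : IsSelfAdjoint q) : p * q = q ↔ q * p = q := by
  rw [← star_inj, star_mul, hp.star_eq, hq.star_eq]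

lemma IsSelfAdjoint.mul_eq_zero_comm {R : Type*} [NonUnitalNonAssocSemiring R] [StarRing R]
    {p q : R} (hp : IsSelfAdjoint p) (hq : IsSelfAdjoint q) : p * q = 0 ↔ q * p = 0 := by
  rw [← star_inj, star_mul, hp.star_eq, hq.star_eq, star_zero]

lemma rank_range_add_of_mul_eq_zero {K V : Type*} [DivisionRing K] [AddCommGroup V] [Module K V]
    {e f : Module.End K V} (he : IsIdempotentElem e) (hf : IsIdempotentElem f)
    (hef : e * f = 0) (hfe : f * e = 0) :
    Module.rank K (LinearMap.range (e + f)) =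
      Module.rank K (LinearMap.range e) + Module.rank K (LinearMap.range f) := by
  have hsup : LinearMap.range (e + f) = LinearMap.range e ⊔ LinearMap.range f := by
    refine le_antisymm (LinearMap.range_add_le e f) (sup_le ?_ ?_) <;> rintro _ ⟨x, rfl⟩
    · exact ⟨e x, by simp [← Module.End.mul_apply, he.eq, hfe]⟩
    · exact ⟨f x, by simp [← Module.End.mul_apply, hf.eq, hef]⟩
  have hinf : LinearMap.range e ⊓ LinearMap.range f = ⊥ := by
    refine (Submodule.eq_bot_iff _).2 fun x ⟨hxe, y, hy⟩ => ?_
    rw [← (LinearMap.IsIdempotentElem.mem_range_iff he).1 hxe, ← hy, ← Module.End.mul_apply, hef,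
      LinearMap.zero_apply]
  rw [hsup, ← Submodule.rank_sup_add_rank_inf_eq, hinf, rank_bot, add_zero]

section Normed

variable {𝕜 E F X : Type*} [NontriviallyNormedField 𝕜] [NormedAddCommGroup E] [NormedSpace 𝕜 E]
  [NormedAddCommGroup F] [NormedSpace 𝕜 F] [TopologicalSpace X]

lemma continuous_apply_of_forall_norm_le {P : X → E →L[𝕜] F} {C : ℝ}
    (hP : ∀ v, Continuous fun t => P t v) (hC : ∀ t, ‖P t‖ ≤ C) {g : X → E}
    (hg : Continuous g) : Continuous fun t => P t (g t) := by
  refine continuous_iff_continuousAt.2 fun t₀ => ?_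
  have hsmall : Tendsto (fun t => P t (g t - g t₀)) (𝓝 t₀) (𝓝 0) := by
    refine squeeze_zero_norm (fun t => (P t).le_of_opNorm_le (hC t) _) ?_
    simpa using ((hg.sub (continuous_const (y := g t₀))).norm.const_mul C).tendsto t₀
  simpa [ContinuousAt] using ((hP (g t₀)).tendsto t₀).add hsmall

lemma eventually_norm_apply_sub_lt {P : X → E →L[𝕜] E} (hP : ∀ v, Continuous fun t => P t v)
    {b : X} {x : E} (hx : P b x = x) {ε : ℝ} (hε : 0 < ε) : ∀ᶠ t in 𝓝 b, ‖P t x - x‖ < ε := by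
  have := (((hP x).tendsto b).sub_const x).norm
  rw [hx, sub_self, norm_zero] at this
  exact this.eventually_lt_const hε

end Normed

section RCLikeNormed

variable {𝕜 E : Type*} [RCLike 𝕜] [NormedAddCommGroup E] [NormedSpace 𝕜 E]

lemma IsIdempotentElem.exists_norm_eq_one_apply_eq_self {p : E →L[𝕜] E} (hp : IsIdempotentElem p)
    (h : p ≠ 0) : ∃ u, ‖u‖ = 1 ∧ p u = u := by
  obtain ⟨z, hz⟩ : ∃ z, p z ≠ 0 := by
    by_contra! h'
    exact h (ContinuousLinearMap.ext h')
  have hfix : p (p z) = p z := congr($(hp.eq) z)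
  exact ⟨(‖p z‖⁻¹ : 𝕜) • p z, norm_smul_inv_norm hz, by rw [map_smul, hfix]⟩

def HasNonvanishingSection (P : ℝ → E →L[𝕜] E) (S : Set ℝ) : Prop :=
  ∃ v : ℝ → E, Continuous v ∧ ∀ t ∈ S, v t ≠ 0 ∧ P t (v t) = v t

variable {P : ℝ → E →L[𝕜] E} {S : Set ℝ}

lemma HasNonvanishingSection.mono {T : Set ℝ} (h : HasNonvanishingSection P S) (hTS : T ⊆ S) :
    HasNonvanishingSection P T :=
  let ⟨v, hv, hvP⟩ := h
  ⟨v, hv, fun t ht => hvP t (hTS ht)⟩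

lemma HasNonvanishingSection.exists_norm_eq_one (h : HasNonvanishingSection P S) {b : ℝ}
    (hb : b ∈ S) :
    ∃ v : ℝ → E, Continuous v ∧ (∀ t ∈ S, v t ≠ 0 ∧ P t (v t) = v t) ∧ ‖v b‖ = 1 := by
  obtain ⟨v, hv, hvP⟩ := h
  refine ⟨fun t => (‖v b‖⁻¹ : 𝕜) • v t, continuous_const.smul hv, fun t ht => ⟨?_, ?_⟩,
    norm_smul_inv_norm (hvP b hb).1⟩
  · exact smul_ne_zero (by simpa using (hvP b hb).1) (hvP t ht).1
  · rw [map_smul, (hvP t ht).2]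

end RCLikeNormed

section InnerProduct

variable {𝕜 E : Type*} [RCLike 𝕜] [NormedAddCommGroup E] [InnerProductSpace 𝕜 E]

lemma half_le_norm_segment {x u : E} (hx : ‖x‖ = 1) (hu : ‖u‖ = 1) (hxu : 0 ≤ re ⟪x, u⟫_𝕜)
    (σ : ℝ) : 1 / 2 ≤ ‖((1 - σ : ℝ) : 𝕜) • x + (σ : 𝕜) • u‖ := by
  set γ := ((1 - σ : ℝ) : 𝕜) • x + (σ : 𝕜) • u
  have hxγ : re ⟪x, γ⟫_𝕜 = (1 - σ) + σ * re ⟪x, u⟫_𝕜 := by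
    simp [γ, inner_add_right, inner_smul_right, inner_self_eq_norm_sq_to_K, hx]
  have huγ : re ⟪u, γ⟫_𝕜 = (1 - σ) * re ⟪x, u⟫_𝕜 + σ := by
    simp [γ, inner_add_right, inner_smul_right, inner_self_eq_norm_sq_to_K, hu, inner_re_symm u x]
  have hxγ_le : re ⟪x, γ⟫_𝕜 ≤ ‖γ‖ := by simpa [hx] using re_inner_le_norm x γ
  have huγ_le : re ⟪u, γ⟫_𝕜 ≤ ‖γ‖ := by simpa [hu] using re_inner_le_norm u γ
  rcases le_total σ (1 / 2) with hσ | hσ <;> nlinarith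

lemma apply_segment_ne_zero {T : E →L[𝕜] E} {x u : E} (hx : ‖x‖ = 1) (hu : ‖u‖ = 1)
    (hxu : 0 ≤ re ⟪x, u⟫_𝕜) {σ : ℝ} (h0 : 0 ≤ σ) (h1 : σ ≤ 1)
    (hTx : σ < 1 → ‖T x - x‖ < 1 / 2) (hTu : ‖T u - u‖ < 1 / 2) :
    T (((1 - σ : ℝ) : 𝕜) • x + (σ : 𝕜) • u) ≠ 0 := by
  set γ := ((1 - σ : ℝ) : 𝕜) • x + (σ : 𝕜) • u
  have hmove : ‖T γ - γ‖ < 1 / 2 := by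
    have hsplit : T γ - γ = ((1 - σ : ℝ) : 𝕜) • (T x - x) + (σ : 𝕜) • (T u - u) := by
      simp only [γ, map_add, map_smul, smul_sub]
      abel
    have hle : ‖T γ - γ‖ ≤ (1 - σ) * ‖T x - x‖ + σ * ‖T u - u‖ := by
      rw [hsplit]
      refine (norm_add_le _ _).trans_eq ?_
      rw [norm_smul, norm_smul, norm_ofReal, norm_ofReal, abs_of_nonneg (sub_nonneg.2 h1),
        abs_of_nonneg h0]
    rcases h1.lt_or_eq with hσ | rfl
    · nlinarith [hTx hσ, norm_nonneg (T x - x)]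
    · norm_num at hle
      linarith
  intro hγ
  rw [hγ, zero_sub, norm_neg] at hmove
  linarith [half_le_norm_segment hx hu hxu σ]

variable [CompleteSpace E] {P : ℝ → E →L[𝕜] E}

lemma HasNonvanishingSection.extend (hP : ∀ v, Continuous fun t => P t v)
    (hproj : ∀ t, IsStarProjection (P t)) {b m : ℝ} {u : E} (hu : ‖u‖ = 1)
    (hPu : ∀ t ∈ Set.Icc b m, ‖P t u - u‖ < 1 / 2) (h : HasNonvanishingSection P (Set.Iic b)) :
    HasNonvanishingSection P (Set.Iic m) := by
  obtain ⟨v, hv, hvP, hx⟩ := h.exists_norm_eq_one Set.self_mem_Iic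
  set x := v b
  obtain ⟨u', hu', hPu', hxu'⟩ : ∃ u', ‖u'‖ = 1 ∧ (∀ t ∈ Set.Icc b m, ‖P t u' - u'‖ < 1 / 2) ∧
      0 ≤ re ⟪x, u'⟫_𝕜 := by
    rcases le_total 0 (re ⟪x, u⟫_𝕜) with hxu | hxu
    · exact ⟨u, hu, hPu, hxu⟩
    · refine ⟨-u, by rwa [norm_neg], fun t ht => ?_, by simpa [inner_neg_right] using hxu⟩
      rw [map_neg, ← neg_sub', norm_neg]
      exact hPu t ht
  obtain ⟨δ, hδ, hδx⟩ := Metric.eventually_nhds_iff.1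
    (eventually_norm_apply_sub_lt hP (hvP b Set.self_mem_Iic).2 (one_half_pos (α := ℝ)))
  set σ : ℝ → Set.Icc (0 : ℝ) 1 := fun t => Set.projIcc 0 1 zero_le_one ((t - b) / δ)
  have hσ : Continuous fun t => (σ t : ℝ) := by fun_prop
  set c : ℝ → E := fun t => P t (((1 - σ t : ℝ) : 𝕜) • x + ((σ t : ℝ) : 𝕜) • u')
  have hc : Continuous c :=
    continuous_apply_of_forall_norm_le hP (fun t => (hproj t).norm_le) (by fun_prop)
  refine ⟨fun t => if t ≤ b then v t else c t, hv.if_le hc continuous_id continuous_const ?_, ?_⟩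
  · rintro t rfl
    simpa [c, σ] using (hvP t Set.self_mem_Iic).2.symm
  intro t (htm : t ≤ m)
  dsimp only
  split_ifs with htb
  · exact hvP t htb
  have hnear : (σ t : ℝ) < 1 → ‖P t x - x‖ < 1 / 2 := by
    intro hσt
    have hlt : (t - b) / δ < 1 := not_le.1 fun h1 => by
      simp [σ, Set.projIcc_of_right_le _ h1] at hσt
    refine hδx ?_
    rw [Real.dist_eq, abs_of_pos (sub_pos.2 (not_le.1 htb))]
    rwa [div_lt_one hδ] at hlt
  exact ⟨apply_segment_ne_zero hx hu' hxu' (σ t).2.1 (σ t).2.2 hnear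
    (hPu' t ⟨(not_le.1 htb).le, htm⟩), congr($((hproj t).isIdempotentElem.eq) _)⟩

theorem HasNonvanishingSection.Iic_of_ne_zero (hP : ∀ v, Continuous fun t => P t v)
    (hproj : ∀ t, IsStarProjection (P t)) (hne : ∀ t, P t ≠ 0) {a : ℝ}
    (ha : HasNonvanishingSection P (Set.Iic a)) (b : ℝ) :
    HasNonvanishingSection P (Set.Iic b) := by
  by_contra hb
  set S := {m | HasNonvanishingSection P (Set.Iic m)}
  have hS : BddAbove S :=
    ⟨b, fun m hm => not_lt.1 fun hbm => hb (hm.mono (Set.Iic_subset_Iic.2 hbm.le))⟩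
  obtain ⟨u, hu, hPu⟩ := (hproj (sSup S)).isIdempotentElem.exists_norm_eq_one_apply_eq_self (hne _)
  obtain ⟨ε, hε, hεu⟩ := Metric.eventually_nhds_iff.1
    (eventually_norm_apply_sub_lt hP hPu (one_half_pos (α := ℝ)))
  obtain ⟨m, hmS, hm⟩ := exists_lt_of_lt_csSup ⟨a, ha⟩ (sub_lt_self (sSup S) hε)
  have hext : sSup S + ε / 2 ∈ S := hmS.extend hP hproj hu fun t ht => hεu <| by
    rw [Real.dist_eq, abs_lt]
    constructor <;> linarith [ht.1, ht.2, le_csSup hS hmS]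
  linarith [le_csSup hS hext]

end InnerProduct

section Subprojection

variable {𝕜 E : Type*} [RCLike 𝕜] [NormedAddCommGroup E] [InnerProductSpace 𝕜 E] [CompleteSpace E]

lemma exists_continuous_unit_section (p : Set.Icc (0 : ℝ) 1 → E →L[𝕜] E)
    (hsc : ∀ v, Continuous fun t => p t v) (hproj : ∀ t, IsStarProjection (p t))
    (hne : ∀ t, p t ≠ 0) :
    ∃ v : Set.Icc (0 : ℝ) 1 → E, Continuous v ∧ ∀ t, ‖v t‖ = 1 ∧ p t (v t) = v t := by
  set P := Set.IccExtend zero_le_one p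
  have hP : ∀ v, Continuous fun t => P t v := fun v => (hsc v).comp continuous_projIcc
  set t₀ : Set.Icc (0 : ℝ) 1 := ⟨0, Set.left_mem_Icc.2 zero_le_one⟩
  obtain ⟨u, hu, hpu⟩ := (hproj t₀).isIdempotentElem.exists_norm_eq_one_apply_eq_self (hne t₀)
  have h₀ : HasNonvanishingSection P (Set.Iic 0) :=
    ⟨fun _ => u, continuous_const, fun t (ht : t ≤ 0) =>
      ⟨norm_ne_zero_iff.1 (by rw [hu]; exact one_ne_zero), by
        simpa only [P, Set.IccExtend_of_le_left _ _ ht] using hpu⟩⟩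
  obtain ⟨v, hv, hvP⟩ := h₀.Iic_of_ne_zero hP (fun _ => hproj _) (fun _ => hne _) 1
  refine ⟨fun t => (‖v t‖⁻¹ : 𝕜) • v t, ?_, fun t => ⟨norm_smul_inv_norm (hvP t t.2.2).1, ?_⟩⟩
  · have hv0 (t : Set.Icc (0 : ℝ) 1) : ((‖v t‖ : ℝ) : 𝕜) ≠ 0 :=
      ofReal_ne_zero.2 (norm_ne_zero_iff.2 (hvP t t.2.2).1)
    fun_prop (disch := exact hv0)
  · rw [map_smul, ← Set.IccExtend_val zero_le_one p t, (hvP t t.2.2).2]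

lemma IsStarProjection.rank_range_add {e f : E →L[𝕜] E} (he : IsStarProjection e)
    (hf : IsStarProjection f) (hef : e * f = 0) :
    Module.rank 𝕜 (LinearMap.range ((e + f : E →L[𝕜] E) : E →ₗ[𝕜] E)) =
      Module.rank 𝕜 (LinearMap.range (e : E →ₗ[𝕜] E)) +
        Module.rank 𝕜 (LinearMap.range (f : E →ₗ[𝕜] E)) := by
  have hfe := (he.isSelfAdjoint.mul_eq_zero_comm hf.isSelfAdjoint).1 hef
  rw [toLinearMap_add]
  exact rank_range_add_of_mul_eq_zero he.isIdempotentElem.toLinearMap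
    hf.isIdempotentElem.toLinearMap (by rw [← toLinearMap_mul, hef, toLinearMap_zero])
    (by rw [← toLinearMap_mul, hfe, toLinearMap_zero])

lemma exists_rankOne_subprojection (p : Set.Icc (0 : ℝ) 1 → E →L[𝕜] E)
    (hsc : ∀ v, Continuous fun t => p t v) (hproj : ∀ t, IsStarProjection (p t))
    (hne : ∀ t, p t ≠ 0) :
    ∃ r : Set.Icc (0 : ℝ) 1 → E →L[𝕜] E, Continuous r ∧ ∀ t, IsStarProjection (r t) ∧
      p t * r t = r t ∧ Module.rank 𝕜 (LinearMap.range (r t : E →ₗ[𝕜] E)) = 1 := by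
  obtain ⟨v, hv, hvp⟩ := exists_continuous_unit_section p hsc hproj hne
  have hv0 (t) : v t ≠ 0 := norm_ne_zero_iff.1 (by rw [(hvp t).1]; exact one_ne_zero)
  refine ⟨fun t => rankOne 𝕜 (v t) (v t), by simp only [rankOne_def]; fun_prop, fun t =>
    ⟨isStarProjection_rankOne_self (hvp t).1, ?_, rank_rankOne (hv0 t) (hv0 t)⟩⟩
  rw [mul_def, comp_rankOne, (hvp t).2]

theorem exists_subprojection_rank_eq (n : ℕ) (p : Set.Icc (0 : ℝ) 1 → E →L[𝕜] E)
    (hsc : ∀ v, Continuous fun t => p t v) (hproj : ∀ t, IsStarProjection (p t))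
    (hrank : ∀ t, (n : Cardinal) ≤ Module.rank 𝕜 (LinearMap.range (p t : E →ₗ[𝕜] E))) :
    ∃ q : Set.Icc (0 : ℝ) 1 → E →L[𝕜] E, Continuous q ∧ ∀ t, IsStarProjection (q t) ∧
      p t * q t = q t ∧ Module.rank 𝕜 (LinearMap.range (q t : E →ₗ[𝕜] E)) = n := by
  induction n generalizing p with
  | zero => exact ⟨0, continuous_const, fun t => ⟨.zero _, mul_zero _, by simp⟩⟩
  | succ n ih =>
    have hne (t) : p t ≠ 0 := fun hp => by
      have := hrank t
      rw [hp] at this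
      simp at this
    obtain ⟨r, hr, hrp⟩ := exists_rankOne_subprojection p hsc hproj hne
    have hpr (t) : p t * r t = r t := (hrp t).2.1
    have hp' (t) : IsStarProjection (p t - r t) := (hrp t).1.sub_of_mul_eq_right (hproj t) (hpr t)
    have hp'r (t) : (p t - r t) * r t = 0 := by
      rw [sub_mul, hpr, (hrp t).1.isIdempotentElem.eq, sub_self]
    have hrank' (t) : (n : Cardinal) ≤ Module.rank 𝕜 (LinearMap.range (p t - r t : E →ₗ[𝕜] E)) := by
      have hsum := (hp' t).rank_range_add (hrp t).1 (hp'r t)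
      rw [sub_add_cancel, (hrp t).2.2] at hsum
      have := hrank t
      rw [hsum, Nat.cast_succ] at this
      exact Cardinal.add_one_le_add_one_iff.1 this
    obtain ⟨q', hq', hq'p⟩ :=
      ih (fun t => p t - r t) (fun v => (hsc v).sub (hr.clm_apply continuous_const)) hp' hrank'
    have hq'r (t) : q' t * r t = 0 := by
      refine ((hrp t).1.isSelfAdjoint.mul_eq_zero_comm (hq'p t).1.isSelfAdjoint).1 ?_
      rw [← (hq'p t).2.1, ← mul_assoc,
        ((hp' t).isSelfAdjoint.mul_eq_zero_comm (hrp t).1.isSelfAdjoint).1 (hp'r t), zero_mul]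
    have hpq' (t) : p t * q' t = q' t := by
      conv_lhs => rw [← (hq'p t).2.1]
      rw [← mul_assoc, mul_sub, (hproj t).isIdempotentElem.eq, hpr, (hq'p t).2.1]
    refine ⟨q' + r, hq'.add hr, fun t => ⟨(hq'p t).1.add (hrp t).1 (hq'r t), ?_, ?_⟩⟩
    · rw [Pi.add_apply, mul_add, hpq', hpr]
    · rw [Pi.add_apply, (hq'p t).1.rank_range_add (hrp t).1 (hq'r t), (hq'p t).2.2, (hrp t).2.2,
        Nat.cast_succ]

end Subprojection

lemma isProjection_iff_isStarProjection {H : Type*} [NormedAddCommGroup H]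
    [InnerProductSpace ℂ H] [CompleteSpace H] {p : H →L[ℂ] H} :
    IsProjection p ↔ IsStarProjection p :=
  ⟨fun h => ⟨h.2, h.1⟩, fun h => ⟨h.2, h.1⟩⟩

theorem exists_rank_n_subprojection_general {H : Type*} [NormedAddCommGroup H]
    [InnerProductSpace ℂ H] [CompleteSpace H]
    (n : ℕ) (p : Set.Icc (0:ℝ) 1 → H →L[ℂ] H)
    (hsc : ∀ v : H, Continuous fun t => p t v)
    (hproj : ∀ t, IsProjection (p t))
    (hrank : ∀ t, (n : Cardinal) ≤ Module.rank ℂ (LinearMap.range (p t : H →ₗ[ℂ] H))) :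
    ∃ q : Set.Icc (0:ℝ) 1 → H →L[ℂ] H,
      Continuous q ∧
      (∀ t, IsProjection (q t)) ∧
      (∀ t, p t * q t = q t ∧ q t * p t = q t) ∧
      (∀ t, FiniteDimensional ℂ (LinearMap.range (q t : H →ₗ[ℂ] H)) ∧
        finrank ℂ (LinearMap.range (q t : H →ₗ[ℂ] H)) = n) := by
  obtain ⟨q, hq, hqp⟩ := exists_subprojection_rank_eq n p hsc
    (fun t => isProjection_iff_isStarProjection.1 (hproj t)) hrank
  refine ⟨q, hq, fun t => isProjection_iff_isStarProjection.2 (hqp t).1,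
    fun t => ⟨(hqp t).2.1, ?_⟩,
    fun t => ⟨.of_rank_eq_nat (hqp t).2.2, finrank_eq_of_rank_eq (hqp t).2.2⟩⟩
  exact ((hproj t).1.mul_eq_right_iff_mul_eq_left (hqp t).1.isSelfAdjoint).1 (hqp t).2.1

/-- A strongly continuous projection-valued function on `[0,1]` whose ranges all have
dimension at least `n` dominates a norm-continuous projection-valued function of
constant rank `n` (the continuous field of Hilbert spaces determined by `p` has a
trivial subfield of rank `n`). -/
theorem exists_rank_n_subprojection {H : Type*} [NormedAddCommGroup H]
    [InnerProductSpace ℂ H] [CompleteSpace H] [TopologicalSpace.SeparableSpace H]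
    (n : ℕ) (p : Set.Icc (0:ℝ) 1 → H →L[ℂ] H)
    (hsc : ∀ v : H, Continuous fun t => p t v)
    (hproj : ∀ t, IsProjection (p t))
    (hrank : ∀ t, (n : Cardinal) ≤ Module.rank ℂ (LinearMap.range (p t : H →ₗ[ℂ] H))) :
    ∃ q : Set.Icc (0:ℝ) 1 → H →L[ℂ] H,
      Continuous q ∧
      (∀ t, IsProjection (q t)) ∧
      (∀ t, p t * q t = q t ∧ q t * p t = q t) ∧
      (∀ t, FiniteDimensional ℂ (LinearMap.range (q t : H →ₗ[ℂ] H)) ∧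
        finrank ℂ (LinearMap.range (q t : H →ₗ[ℂ] H)) = n) :=
  exists_rank_n_subprojection_general n p hsc hproj hrank
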